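/- Let S be the sum of N i.i.d. half-normal random variables with density √(2/π)e^{−z²/2} on (0,∞). Then the density f_S of S satisfies s^{−(N−1)} f_S(s) → (2/π)^{N/2}/(N−1)! as s → 0⁺. -/

import Mathlib

open Real MeasureTheory ProbabilityTheory Filter
open scoped ENNReal

noncomputable def halfNormal : Measure ℝ :=
  volume.withDensity (fun z => ENNReal.ofReal
    (if 0 < z then Real.sqrt (2 / Real.pi) * Real.exp (-z ^ 2 / 2) else 0))

/-!
On the simplex `{z ∈ (0, ∞)ᴺ | ∑ zᵢ = x}` we have `∑ zᵢ² ≤ x²`, so the product of the Gaussian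
factors `∏ exp (-zᵢ² / 2)` lies between `exp (-x² / 2)` and `1`. Integrating over the simplex,
whose `(N - 1)`-dimensional volume is `x ^ (N - 1) / (N - 1)!`, squeezes the density of the sum:
`c ^ N exp (-x² / 2) x ^ (N - 1) / (N - 1)! ≤ f_N x ≤ c ^ N x ^ (N - 1) / (N - 1)!` with
`c = √(2 / π)`; this is proved by induction along the convolution `f_{N+1} = f₁ ⋆ f_N`.
The continuous density `f_S` agrees with `f_N` almost everywhere, and the two bounds are closed
conditions, so they hold for `f_S` at every `s > 0`.
-/

open Set Topology
open scoped Nat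

namespace MeasureTheory

-- `iterLConv f μ n` is the convolution of `n + 1` copies of `f`.
noncomputable def iterLConv {G : Type*} [Add G] [Neg G] [MeasurableSpace G] (f : G → ℝ≥0∞)
    (μ : Measure G) : ℕ → G → ℝ≥0∞
  | 0 => f
  | n + 1 => f ⋆ₗ[μ] iterLConv f μ n

theorem measurable_iterLConv {G : Type*} [Add G] [Neg G] [MeasurableSpace G] [MeasurableAdd₂ G]
    [MeasurableNeg G] {f : G → ℝ≥0∞} (hf : Measurable f) (μ : Measure G) [SFinite μ] :
    ∀ n, Measurable (iterLConv f μ n)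
  | 0 => hf
  | n + 1 => measurable_lconvolution μ hf (measurable_iterLConv hf μ n)

theorem map_sum_eq_withDensity_iterLConv {G Ω ι : Type*} [AddCommGroup G] [MeasurableSpace G]
    [MeasurableAdd₂ G] [MeasurableNeg G] [MeasurableSpace Ω] {P : Measure Ω} [IsFiniteMeasure P]
    {Z : ι → Ω → G} (hmeas : ∀ i, Measurable (Z i)) (hindep : iIndepFun Z P) {μ : Measure G}
    [SFinite μ] [μ.IsAddLeftInvariant] {f : G → ℝ≥0∞} (hf : Measurable f)
    (hlaw : ∀ i, P.map (Z i) = μ.withDensity f) {s : Finset ι} (hs : s.Nonempty) :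
    P.map (fun ω => ∑ i ∈ s, Z i ω) = μ.withDensity (iterLConv f μ (s.card - 1)) := by
  induction hs using Finset.Nonempty.cons_induction with
  | singleton i => simpa [iterLConv] using hlaw i
  | cons i s hi hs ih =>
    have hindep_i : IndepFun (Z i) (fun ω => ∑ j ∈ s, Z j ω) P := by
      simpa only [Finset.sum_fn] using (hindep.indepFun_finsetSum_of_notMem hmeas hi).symm
    have hcard : (Finset.cons i s hi).card - 1 = s.card - 1 + 1 := by
      rw [Finset.card_cons]; have := hs.card_pos; omega
    simp only [Finset.sum_cons]
    rw [← Pi.add_def, hindep_i.map_add_eq_map_conv_map (hmeas i)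
      (Finset.measurable_sum _ fun j _ => hmeas j), hlaw i, ih, hcard,
      conv_withDensity_eq_lconvolution hf (measurable_iterLConv hf μ _)]
    rfl

theorem Measure.le_on_open_of_ae_le {X Y : Type*} [TopologicalSpace X]
    [MeasurableSpace X] [LinearOrder Y] [TopologicalSpace Y] [OrderClosedTopology Y]
    {μ : Measure X} [μ.IsOpenPosMeasure] {U : Set X} {f g : X → Y}
    (h : ∀ᵐ x ∂μ.restrict U, f x ≤ g x) (hU : IsOpen U) (hf : ContinuousOn f U)
    (hg : ContinuousOn g U) : ∀ x ∈ U, f x ≤ g x := by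
  have hinf : EqOn (f ⊓ g) f U :=
    Measure.eqOn_open_of_ae_eq (h.mono fun x hx => inf_eq_left.2 hx) hU (hf.inf hg) hf
  exact fun x hx => (hinf hx).symm ▸ inf_le_right

end MeasureTheory

theorem lconvolution_eq_setLIntegral_Ioo {f g : ℝ → ℝ≥0∞} (hf : ∀ x ≤ 0, f x = 0)
    (hg : ∀ x ≤ 0, g x = 0) (x : ℝ) : (f ⋆ₗ g) x = ∫⁻ y in Ioo 0 x, f y * g (x - y) := by
  rw [lconvolution_def, setLIntegral_eq_of_support_subset]
  · simp only [neg_add_eq_sub]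
  · intro y hy
    rw [Function.mem_support] at hy
    constructor
    · by_contra h; exact hy (by rw [hf y (not_lt.1 h), zero_mul])
    · by_contra h; exact hy (by rw [hg (x - y) (by linarith [not_lt.1 h]), mul_zero])

theorem iterLConv_eq_zero_of_nonpos {f : ℝ → ℝ≥0∞} (hf : ∀ x ≤ 0, f x = 0) :
    ∀ n, ∀ x ≤ 0, iterLConv f volume n x = 0
  | 0 => hf
  | n + 1 => fun x hx => by
    rw [iterLConv, lconvolution_eq_setLIntegral_Ioo hf (iterLConv_eq_zero_of_nonpos hf n),
      Ioo_eq_empty (not_lt.2 hx), Measure.restrict_empty, lintegral_zero_measure]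

theorem setLIntegral_Ioo_ofReal_mul_sub_pow {K x : ℝ} (hK : 0 ≤ K) (hx : 0 ≤ x) (n : ℕ) :
    ∫⁻ y in Ioo 0 x, ENNReal.ofReal (K * (x - y) ^ n)
      = ENNReal.ofReal (K * x ^ (n + 1) / (n + 1)) := by
  have hint : IntegrableOn (fun y => K * (x - y) ^ n) (Ioo 0 x) :=
    (by fun_prop : Continuous fun y : ℝ => K * (x - y) ^ n).integrableOn_Icc.mono_set
      Ioo_subset_Icc_self
  have hnonneg : ∀ᵐ y ∂volume.restrict (Ioo 0 x), 0 ≤ K * (x - y) ^ n := by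
    filter_upwards [ae_restrict_mem measurableSet_Ioo] with y hy
    exact mul_nonneg hK (pow_nonneg (by linarith [hy.2]) n)
  rw [← ofReal_integral_eq_lintegral_ofReal hint hnonneg, ← integral_Ioc_eq_integral_Ioo,
    ← intervalIntegral.integral_of_le hx, intervalIntegral.integral_const_mul,
    intervalIntegral.integral_comp_sub_left (fun y => y ^ n), integral_pow]
  simp [mul_div_assoc]

noncomputable def halfNormalPDF (z : ℝ) : ℝ≥0∞ :=
  ENNReal.ofReal (if 0 < z then √(2 / π) * exp (-z ^ 2 / 2) else 0)

theorem measurable_halfNormalPDF : Measurable halfNormalPDF :=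
  (Measurable.ite measurableSet_Ioi (by fun_prop) measurable_const).ennreal_ofReal

theorem halfNormalPDF_of_nonpos {z : ℝ} (hz : z ≤ 0) : halfNormalPDF z = 0 := by
  simp [halfNormalPDF, not_lt.2 hz]

theorem halfNormalPDF_of_pos {z : ℝ} (hz : 0 < z) :
    halfNormalPDF z = ENNReal.ofReal (√(2 / π) * exp (-z ^ 2 / 2)) := by
  simp [halfNormalPDF, hz]

theorem halfNormalPDF_le (z : ℝ) : halfNormalPDF z ≤ ENNReal.ofReal √(2 / π) := by
  rcases le_or_gt z 0 with hz | hz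
  · simp [halfNormalPDF_of_nonpos hz]
  · rw [halfNormalPDF_of_pos hz]
    refine ENNReal.ofReal_le_ofReal (mul_le_of_le_one_right (sqrt_nonneg _) ?_)
    exact exp_le_one_iff.2 (by nlinarith [sq_nonneg z])

theorem exp_neg_sq_half_le_mul {x y : ℝ} (hy : 0 ≤ y) (hyx : y ≤ x) :
    exp (-x ^ 2 / 2) ≤ exp (-y ^ 2 / 2) * exp (-(x - y) ^ 2 / 2) := by
  rw [← exp_add]
  exact exp_le_exp.2 (by nlinarith)

theorem iterLConv_halfNormalPDF_eq_setLIntegral (n : ℕ) (x : ℝ) :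
    iterLConv halfNormalPDF volume (n + 1) x
      = ∫⁻ y in Ioo 0 x, halfNormalPDF y * iterLConv halfNormalPDF volume n (x - y) :=
  lconvolution_eq_setLIntegral_Ioo (fun _ => halfNormalPDF_of_nonpos)
    (iterLConv_eq_zero_of_nonpos (fun _ => halfNormalPDF_of_nonpos) n) x

theorem iterLConv_halfNormalPDF_le (n : ℕ) {x : ℝ} (hx : 0 < x) :
    iterLConv halfNormalPDF volume n x
      ≤ ENNReal.ofReal (√(2 / π) ^ (n + 1) / n ! * x ^ n) := by
  induction n generalizing x with
  | zero => simpa [iterLConv] using halfNormalPDF_le x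
  | succ n ih =>
    rw [iterLConv_halfNormalPDF_eq_setLIntegral]
    calc _ ≤ ∫⁻ y in Ioo 0 x, ENNReal.ofReal (√(2 / π) ^ (n + 2) / n ! * (x - y) ^ n) := by
          refine setLIntegral_mono' measurableSet_Ioo fun y hy => ?_
          have hxy : 0 < x - y := sub_pos.2 hy.2
          calc _ ≤ ENNReal.ofReal √(2 / π) *
                ENNReal.ofReal (√(2 / π) ^ (n + 1) / n ! * (x - y) ^ n) :=
                mul_le_mul' (halfNormalPDF_le y) (ih hxy)
            _ = _ := by
                rw [← ENNReal.ofReal_mul (sqrt_nonneg _)]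
                congr 1
                ring
      _ = ENNReal.ofReal (√(2 / π) ^ (n + 2) / n ! * x ^ (n + 1) / (n + 1)) :=
          setLIntegral_Ioo_ofReal_mul_sub_pow (by positivity) hx.le n
      _ = _ := by
          rw [Nat.factorial_succ]
          push_cast
          field_simp

theorem ofReal_le_iterLConv_halfNormalPDF (n : ℕ) {x : ℝ} (hx : 0 < x) :
    ENNReal.ofReal (√(2 / π) ^ (n + 1) / n ! * exp (-x ^ 2 / 2) * x ^ n)
      ≤ iterLConv halfNormalPDF volume n x := by
  induction n generalizing x with
  | zero => simp [iterLConv, halfNormalPDF_of_pos hx]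
  | succ n ih =>
    rw [iterLConv_halfNormalPDF_eq_setLIntegral]
    have hK : 0 ≤ √(2 / π) ^ (n + 2) / n ! * exp (-x ^ 2 / 2) := by positivity
    calc _ = ENNReal.ofReal
            (√(2 / π) ^ (n + 2) / n ! * exp (-x ^ 2 / 2) * x ^ (n + 1) / (n + 1)) := by
          rw [Nat.factorial_succ]
          push_cast
          field_simp
      _ = ∫⁻ y in Ioo 0 x,
            ENNReal.ofReal (√(2 / π) ^ (n + 2) / n ! * exp (-x ^ 2 / 2) * (x - y) ^ n) :=
          (setLIntegral_Ioo_ofReal_mul_sub_pow hK hx.le n).symm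
      _ ≤ _ := by
          refine setLIntegral_mono' measurableSet_Ioo fun y hy => ?_
          have hxy : 0 < x - y := sub_pos.2 hy.2
          rw [halfNormalPDF_of_pos hy.1]
          refine le_trans ?_ (mul_le_mul' le_rfl (ih hxy))
          rw [← ENNReal.ofReal_mul (by positivity)]
          refine ENNReal.ofReal_le_ofReal ?_
          calc _ ≤ √(2 / π) ^ (n + 2) / n ! * (exp (-y ^ 2 / 2) * exp (-(x - y) ^ 2 / 2)) *
                (x - y) ^ n := by
                gcongr
                exact exp_neg_sq_half_le_mul hy.1.le hy.2.le
            _ = _ := by ring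

theorem bounds_of_ae_ofReal_eq_iterLConv_halfNormalPDF (n : ℕ) {f : ℝ → ℝ}
    (hcont : ContinuousOn f (Ioi 0))
    (hf : ∀ᵐ s ∂volume.restrict (Ioi 0), ENNReal.ofReal (f s) = iterLConv halfNormalPDF volume n s)
    (s : ℝ) (hs : 0 < s) :
    √(2 / π) ^ (n + 1) / n ! * exp (-s ^ 2 / 2) * s ^ n ≤ f s ∧
      f s ≤ √(2 / π) ^ (n + 1) / n ! * s ^ n := by
  have hlow : ∀ᵐ s ∂volume.restrict (Ioi 0),
      √(2 / π) ^ (n + 1) / n ! * exp (-s ^ 2 / 2) * s ^ n ≤ f s := by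
    filter_upwards [hf, ae_restrict_mem measurableSet_Ioi] with s hs (hpos : 0 < s)
    have := (ofReal_le_iterLConv_halfNormalPDF n hpos).trans hs.symm.le
    exact (ENNReal.ofReal_le_ofReal_iff'.1 this).resolve_right (not_le.2 (by positivity))
  have hup : ∀ᵐ s ∂volume.restrict (Ioi 0), f s ≤ √(2 / π) ^ (n + 1) / n ! * s ^ n := by
    filter_upwards [hf, ae_restrict_mem measurableSet_Ioi] with s hs (hpos : 0 < s)
    exact (ENNReal.ofReal_le_ofReal_iff (by positivity)).1
      (hs.le.trans (iterLConv_halfNormalPDF_le n hpos))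
  exact ⟨Measure.le_on_open_of_ae_le hlow isOpen_Ioi (by fun_prop) hcont s hs,
    Measure.le_on_open_of_ae_le hup isOpen_Ioi hcont (by fun_prop) s hs⟩

theorem tendsto_div_pow_of_exp_bounds {f : ℝ → ℝ} {K : ℝ} (n : ℕ)
    (hf : ∀ s, 0 < s → K * exp (-s ^ 2 / 2) * s ^ n ≤ f s ∧ f s ≤ K * s ^ n) :
    Tendsto (fun s => f s / s ^ n) (𝓝[>] 0) (𝓝 K) := by
  have hlim : Tendsto (fun s : ℝ => K * exp (-s ^ 2 / 2)) (𝓝[>] 0) (𝓝 K) :=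
    ((by fun_prop : Continuous fun s : ℝ => K * exp (-s ^ 2 / 2)).tendsto' 0 K
      (by simp)).mono_left nhdsWithin_le_nhds
  refine tendsto_of_tendsto_of_tendsto_of_le_of_le' hlim tendsto_const_nhds ?_ ?_ <;>
    filter_upwards [self_mem_nhdsWithin] with s (hs : 0 < s)
  · exact (le_div_iff₀ (pow_pos hs n)).2 (hf s hs).1
  · exact (div_le_iff₀ (pow_pos hs n)).2 (hf s hs).2

/-- If S is the sum of N i.i.d. half-normal random variables with density f_S, then
s^{−(N−1)} f_S(s) → (2/π)^{N/2}/(N−1)! as s → 0⁺. -/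
theorem density_of_S_near_zero
    {Ω : Type*} [MeasureSpace Ω] [IsProbabilityMeasure (ℙ : Measure Ω)]
    (N : ℕ) (hN : 1 ≤ N) (Z : Fin N → Ω → ℝ)
    (hmeas : ∀ i, Measurable (Z i))
    (hindep : iIndepFun Z ℙ)
    (hlaw : ∀ i, Measure.map (Z i) ℙ = halfNormal)
    (fS : ℝ → ℝ) (hfS_cont : ContinuousOn fS (Set.Ioi 0))
    (hfS : Measure.map (fun ω => ∑ i, Z i ω) ℙ =
      volume.withDensity (fun s => ENNReal.ofReal (if 0 < s then fS s else 0))) :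
    Tendsto (fun s : ℝ => fS s / s ^ ((N : ℝ) - 1))
      (nhdsWithin 0 (Set.Ioi 0))
      (nhds ((2 / Real.pi) ^ ((N : ℝ) / 2) / (Nat.factorial (N - 1) : ℝ))) := by
  obtain ⟨n, rfl⟩ : ∃ n, N = n + 1 := ⟨N - 1, by omega⟩
  have hlawS : Measure.map (fun ω => ∑ i, Z i ω) ℙ
      = volume.withDensity (iterLConv halfNormalPDF volume n) := by
    simpa using map_sum_eq_withDensity_iterLConv hmeas hindep measurable_halfNormalPDF hlaw
      Finset.univ_nonempty
  have hmeas_fS : Measurable fun s => ENNReal.ofReal (if 0 < s then fS s else 0) :=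
    (hfS_cont.measurable_piecewise continuousOn_const measurableSet_Ioi).ennreal_ofReal
  have hae := (withDensity_eq_iff_of_sigmaFinite hmeas_fS.aemeasurable
    (measurable_iterLConv measurable_halfNormalPDF volume n).aemeasurable).1 (hfS.symm.trans hlawS)
  have hbounds := bounds_of_ae_ofReal_eq_iterLConv_halfNormalPDF n hfS_cont <| by
    filter_upwards [ae_restrict_of_ae hae, ae_restrict_mem measurableSet_Ioi]
      with s hs (hpos : 0 < s)
    rwa [if_pos hpos] at hs
  have hK : √(2 / π) ^ (n + 1) / n ! = (2 / π) ^ (((n + 1 : ℕ) : ℝ) / 2) / (n + 1 - 1)! := by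
    rw [sqrt_eq_rpow, ← rpow_natCast, ← rpow_mul (by positivity), Nat.add_sub_cancel]
    congr 2
    push_cast
    ring
  rw [← hK, show ((n + 1 : ℕ) : ℝ) - 1 = n by push_cast; ring]
  simpa only [rpow_natCast] using tendsto_div_pow_of_exp_bounds n hbounds
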